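/- arXiv:1910.12112 — 4 statements merged into one kernel-verified Lean document; each statement's English description precedes it below -/
import Mathlib

section
/- Let a > 0 and let C_a = {f ∈ BV[0,1] : f ≥ 0, Var(f) ≤ a·∫₀¹ f} \ {0}. If f, g ∈ BV[0,1] satisfy -f ⪯ g ⪯ f with respect to the order induced by C_a (i.e., f - g ∈ C_a ∪ {0} and f + g ∈ C_a ∪ {0}), then ‖g‖_{BV} ≤ (2a+1)‖f‖_{BV}, where ‖h‖_{BV} = max{‖h‖₁, Var(h)}. -/
open Set MeasureTheory

/-- The total variation of a function on `[0,1]`. -/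
noncomputable def Var01 (f : ℝ → ℝ) : ℝ :=
  (eVariationOn f (Set.Icc (0:ℝ) 1)).toReal

/-- The `L¹` norm of a function on `[0,1]`. -/
noncomputable def L1norm01 (f : ℝ → ℝ) : ℝ :=
  ∫ x in Set.Icc (0:ℝ) 1, |f x|

/-- The `BV` norm `‖h‖_{BV} = max{‖h‖₁, Var(h)}`. -/
noncomputable def BVnorm01 (f : ℝ → ℝ) : ℝ :=
  max (L1norm01 f) (Var01 f)

/-- Membership in `C_a ∪ {0}`: nonnegative on `[0,1]` with `Var(h) ≤ a ∫₀¹ h`. -/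
def memConeZero (a : ℝ) (h : ℝ → ℝ) : Prop :=
  (∀ x ∈ Set.Icc (0:ℝ) 1, 0 ≤ h x) ∧ Var01 h ≤ a * ∫ x in Set.Icc (0:ℝ) 1, h x

/-!
The two cone conditions give `|g| ≤ f` pointwise, hence `‖g‖₁ ≤ ‖f‖₁` and `∫ (f + g) ≤ 2 ‖f‖₁`.
Writing `g = (f + g) - f`, subadditivity of the variation and the cone condition on `f + g` give
`Var g ≤ Var (f + g) + Var f ≤ a ∫ (f + g) + Var f ≤ 2a ‖f‖₁ + Var f`.
-/

namespace eVariationOn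

variable {α E : Type*} [LinearOrder α] [SeminormedAddCommGroup E]

theorem add_le (f g : α → E) (s : Set α) :
    eVariationOn (f + g) s ≤ eVariationOn f s + eVariationOn g s := by
  refine iSup_le fun ⟨n, u, hu, us⟩ => ?_
  calc ∑ i ∈ Finset.range n, edist ((f + g) (u (i + 1))) ((f + g) (u i))
      ≤ ∑ i ∈ Finset.range n,
          (edist (f (u (i + 1))) (f (u i)) + edist (g (u (i + 1))) (g (u i))) :=
        Finset.sum_le_sum fun i _ => edist_add_add_le _ _ _ _
    _ ≤ eVariationOn f s + eVariationOn g s := by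
        rw [Finset.sum_add_distrib]
        exact add_le_add (sum_le (f := f) hu us) (sum_le (f := g) hu us)

theorem neg (f : α → E) (s : Set α) : eVariationOn (-f) s = eVariationOn f s := by
  simp only [eVariationOn, Pi.neg_apply, edist_neg_neg]

theorem sub_le (f g : α → E) (s : Set α) :
    eVariationOn (f - g) s ≤ eVariationOn f s + eVariationOn g s := by
  simpa only [sub_eq_add_neg, neg] using add_le f (-g) s

end eVariationOn

theorem BoundedVariationOn.add {α E : Type*} [LinearOrder α] [SeminormedAddCommGroup E]
    {f g : α → E} {s : Set α} (hf : BoundedVariationOn f s) (hg : BoundedVariationOn g s) :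
    BoundedVariationOn (f + g) s :=
  ne_top_of_le_ne_top (ENNReal.add_ne_top.2 ⟨hf, hg⟩) (eVariationOn.add_le f g s)

theorem var01_sub_le {f g : ℝ → ℝ} (hf : BoundedVariationOn f (Icc 0 1))
    (hg : BoundedVariationOn g (Icc 0 1)) : Var01 (f - g) ≤ Var01 f + Var01 g := by
  rw [Var01, Var01, Var01, ← ENNReal.toReal_add hf hg]
  exact ENNReal.toReal_mono (ENNReal.add_ne_top.2 ⟨hf, hg⟩) (eVariationOn.sub_le f g _)

theorem abs_le_of_memConeZero_add_sub {a : ℝ} {f g : ℝ → ℝ} (h₁ : memConeZero a (f + g))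
    (h₂ : memConeZero a (f - g)) : ∀ x ∈ Icc (0:ℝ) 1, |g x| ≤ f x := fun x hx => by
  have h₁x := h₁.1 x hx
  have h₂x := h₂.1 x hx
  simp only [Pi.add_apply, Pi.sub_apply] at h₁x h₂x
  exact abs_le.2 ⟨by linarith, by linarith⟩

theorem l1norm01_eq_integral {f : ℝ → ℝ} (hf : ∀ x ∈ Icc (0:ℝ) 1, 0 ≤ f x) :
    L1norm01 f = ∫ x in Icc (0:ℝ) 1, f x :=
  setIntegral_congr_fun measurableSet_Icc fun x hx => abs_of_nonneg (hf x hx)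

theorem l1norm01_le_of_abs_le {f g : ℝ → ℝ} (hfi : IntegrableOn f (Icc 0 1))
    (hgi : IntegrableOn g (Icc 0 1)) (hgf : ∀ x ∈ Icc (0:ℝ) 1, |g x| ≤ f x) :
    L1norm01 g ≤ L1norm01 f := by
  rw [l1norm01_eq_integral fun x hx => (abs_nonneg _).trans (hgf x hx)]
  exact setIntegral_mono_on hgi.abs hfi measurableSet_Icc hgf

theorem var01_add_le_of_memConeZero {a : ℝ} (ha : 0 ≤ a) {f g : ℝ → ℝ}
    (hfi : IntegrableOn f (Icc 0 1)) (hgi : IntegrableOn g (Icc 0 1))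
    (hgf : ∀ x ∈ Icc (0:ℝ) 1, |g x| ≤ f x) (hcone : memConeZero a (f + g)) :
    Var01 (f + g) ≤ 2 * a * L1norm01 f := by
  have hint : ∫ x in Icc (0:ℝ) 1, (f + g) x ≤ ∫ x in Icc (0:ℝ) 1, 2 * f x :=
    setIntegral_mono_on (hfi.add hgi) (hfi.const_mul 2) measurableSet_Icc fun x hx => by
      have := (abs_le.1 (hgf x hx)).2
      simp only [Pi.add_apply]
      linarith
  rw [integral_const_mul, ← l1norm01_eq_integral fun x hx => (abs_nonneg _).trans (hgf x hx)]
    at hint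
  calc Var01 (f + g) ≤ a * ∫ x in Icc (0:ℝ) 1, (f + g) x := hcone.2
    _ ≤ a * (2 * L1norm01 f) := mul_le_mul_of_nonneg_left hint ha
    _ = 2 * a * L1norm01 f := by ring

/-- If `-f ⪯ g ⪯ f` in the order induced by the cone
`C_a = {f ∈ BV[0,1] : f ≥ 0, Var(f) ≤ a ∫₀¹ f} \ {0}`, then
`‖g‖_{BV} ≤ (2a+1) ‖f‖_{BV}`. -/
theorem cone_adapted_bound (a : ℝ) (ha : 0 < a) (f g : ℝ → ℝ)
    (hf : BoundedVariationOn f (Set.Icc 0 1))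
    (hg : BoundedVariationOn g (Set.Icc 0 1))
    (hfi : IntegrableOn f (Set.Icc 0 1))
    (hgi : IntegrableOn g (Set.Icc 0 1))
    (h₁ : memConeZero a (f + g))   -- `-f ⪯ g`, i.e. `g - (-f) ∈ C_a ∪ {0}`
    (h₂ : memConeZero a (f - g)) : -- `g ⪯ f`, i.e. `f - g ∈ C_a ∪ {0}`
    BVnorm01 g ≤ (2 * a + 1) * BVnorm01 f := by
  have habs : ∀ x ∈ Icc (0:ℝ) 1, |g x| ≤ f x := abs_le_of_memConeZero_add_sub h₁ h₂
  have hL1 : L1norm01 g ≤ L1norm01 f := l1norm01_le_of_abs_le hfi hgi habs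
  have hVar : Var01 g ≤ 2 * a * L1norm01 f + Var01 f :=
    calc Var01 g = Var01 ((f + g) - f) := by rw [add_sub_cancel_left]
      _ ≤ Var01 (f + g) + Var01 f := var01_sub_le (hf.add hg) hf
      _ ≤ 2 * a * L1norm01 f + Var01 f := by
        gcongr
        exact var01_add_le_of_memConeZero ha.le hfi hgi habs h₁
  have hL1f : L1norm01 f ≤ BVnorm01 f := le_max_left _ _
  have hVarf : Var01 f ≤ BVnorm01 f := le_max_right _ _
  have hL1f_nonneg : 0 ≤ L1norm01 f :=
    setIntegral_nonneg measurableSet_Icc fun _ _ => abs_nonneg _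
  refine max_le ?_ ?_ <;> nlinarith
end

section
/- Let (X, ‖·‖, C) be a real Banach space with a nice D-adapted cone. If f, g ∈ C are comparable (i.e., α(g,f) > 0 and β(g,f) < ∞), then ‖f - ((α(g,f)+β(g,f))/2)·g‖ ≤ (D/2)·‖g‖·α(g,f)·(e^{θ(f,g)} - 1), where θ(f,g) = log(β(g,f)/α(g,f)). -/
/-- The partial order induced by a cone: `x ⪯ y` iff `y - x ∈ C ∪ {0}`. -/
def ConeLE {X : Type*} [AddCommGroup X] (C : Set X) (x y : X) : Prop :=
  y - x ∈ insert (0:X) C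

/-- A nice `D`-adapted cone: convex, closed under positive scalars, blunt,
salient, with `C ∪ {0}` closed, and `D`-adapted. -/
structure IsNiceCone {X : Type*} [NormedAddCommGroup X] [NormedSpace ℝ X]
    (C : Set X) (D : ℝ) : Prop where
  convex : Convex ℝ C
  smul_mem : ∀ c : ℝ, 0 < c → ∀ x ∈ C, c • x ∈ C
  blunt : (0:X) ∉ C
  salient : ∀ x ∈ C, -x ∉ C
  closed : IsClosed (insert (0:X) C)
  one_le : 1 ≤ D
  adapted : ∀ x y : X, ConeLE C (-y) x → ConeLE C x y → ‖x‖ ≤ D * ‖y‖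

/-- `α(v,w) = sup{λ ≥ 0 : λ v ⪯ w}`. -/
noncomputable def coneAlpha {X : Type*} [NormedAddCommGroup X] [NormedSpace ℝ X]
    (C : Set X) (v w : X) : ℝ :=
  sSup {l : ℝ | 0 ≤ l ∧ ConeLE C (l • v) w}


/-- `β(v,w) = inf{μ ≥ 0 : w ⪯ μ v}`. -/
noncomputable def coneBeta {X : Type*} [NormedAddCommGroup X] [NormedSpace ℝ X]
    (C : Set X) (v w : X) : ℝ :=
  sInf {m : ℝ | 0 ≤ m ∧ ConeLE C w (m • v)}

/-- The Hilbert projective metric `θ(v,w) = log (β(v,w) / α(v,w))`. -/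
noncomputable def coneTheta {X : Type*} [NormedAddCommGroup X] [NormedSpace ℝ X]
    (C : Set X) (v w : X) : ℝ :=
  Real.log (coneBeta C v w / coneAlpha C v w)

/-!
Write `K = C ∪ {0}`, `A = α(g,f)` and `B = β(g,f)`. Since `K` is closed, the supremum and infimum
are attained: `A g ⪯ f ⪯ B g`. Subtracting the midpoint `(A+B)/2 • g` gives
`-((B-A)/2 • g) ⪯ f - (A+B)/2 • g ⪯ (B-A)/2 • g`, so `D`-adaptedness bounds the norm by
`D (B-A)/2 ‖g‖`, which is the right-hand side because `e^θ = B/A`.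
-/

lemma Real.nonempty_and_bddAbove_of_sSup_pos {s : Set ℝ} (hs : 0 < sSup s) :
    s.Nonempty ∧ BddAbove s := by
  refine ⟨Set.nonempty_iff_ne_empty.mpr ?_, ?_⟩
  · rintro rfl
    simp at hs
  · by_contra h
    rw [Real.sSup_of_not_bddAbove h] at hs
    exact lt_irrefl 0 hs

namespace IsNiceCone

variable {X : Type*} [NormedAddCommGroup X] [NormedSpace ℝ X] {C : Set X} {D : ℝ}

lemma smul_mem_insert (hC : IsNiceCone C D) {c : ℝ} (hc : 0 ≤ c) {x : X}
    (hx : x ∈ insert (0 : X) C) : c • x ∈ insert (0 : X) C := by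
  rcases hc.eq_or_lt with rfl | hc
  · simp
  rcases hx with rfl | hx
  · simp
  · exact Or.inr (hC.smul_mem c hc x hx)

lemma add_mem_insert (hC : IsNiceCone C D) {x y : X}
    (hx : x ∈ insert (0 : X) C) (hy : y ∈ insert (0 : X) C) : x + y ∈ insert (0 : X) C := by
  rcases hx with rfl | hx
  · simpa using hy
  rcases hy with rfl | hy
  · simpa using Or.inr hx
  have hmid := hC.convex hx hy (by norm_num : (0 : ℝ) ≤ 1 / 2) (by norm_num : (0 : ℝ) ≤ 1 / 2)
    (by norm_num)
  have h2 := hC.smul_mem 2 two_pos _ hmid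
  rw [smul_add, smul_smul, smul_smul] at h2
  norm_num at h2
  exact Or.inr h2

end IsNiceCone

section AlphaBeta

variable {X : Type*} [NormedAddCommGroup X] [NormedSpace ℝ X] {C : Set X}

lemma isClosed_setOf_coneLE_smul_left (hC : IsClosed (insert (0 : X) C)) (g f : X) :
    IsClosed {l : ℝ | 0 ≤ l ∧ ConeLE C (l • g) f} :=
  isClosed_Ici.inter <| hC.preimage (continuous_const.sub (continuous_id.smul continuous_const))

lemma isClosed_setOf_coneLE_smul_right (hC : IsClosed (insert (0 : X) C)) (g f : X) :
    IsClosed {m : ℝ | 0 ≤ m ∧ ConeLE C f (m • g)} :=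
  isClosed_Ici.inter <| hC.preimage ((continuous_id.smul continuous_const).sub continuous_const)

lemma coneLE_coneAlpha_smul (hC : IsClosed (insert (0 : X) C)) {g f : X}
    (hα : 0 < coneAlpha C g f) : ConeLE C (coneAlpha C g f • g) f :=
  let ⟨hne, hbdd⟩ := Real.nonempty_and_bddAbove_of_sSup_pos hα
  ((isClosed_setOf_coneLE_smul_left hC g f).csSup_mem hne hbdd).2

lemma coneLE_coneBeta_smul (hC : IsClosed (insert (0 : X) C)) {g f : X}
    (hβ : {m : ℝ | 0 ≤ m ∧ ConeLE C f (m • g)}.Nonempty) : ConeLE C f (coneBeta C g f • g) :=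
  ((isClosed_setOf_coneLE_smul_right hC g f).csInf_mem hβ ⟨0, fun _ hm => hm.1⟩).2

/-- If `B < A`, then `(B - A) • g ⪰ 0` makes `-g ⪰ 0`, so `(A + 1) • g ⪯ f`, against `A = sup`. -/
lemma coneAlpha_le_coneBeta {D : ℝ} (hC : IsNiceCone C D) {g f : X}
    (hα : 0 < coneAlpha C g f) (hβ : {m : ℝ | 0 ≤ m ∧ ConeLE C f (m • g)}.Nonempty) :
    coneAlpha C g f ≤ coneBeta C g f := by
  set A := coneAlpha C g f
  set B := coneBeta C g f
  by_contra! hBA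
  have hA : f - A • g ∈ insert (0 : X) C := coneLE_coneAlpha_smul hC.closed hα
  have hB : B • g - f ∈ insert (0 : X) C := coneLE_coneBeta_smul hC.closed hβ
  have hneg : -g ∈ insert (0 : X) C := by
    have hBAg : (B - A) • g ∈ insert (0 : X) C := by
      convert hC.add_mem_insert hA hB using 1
      module
    convert hC.smul_mem_insert (inv_nonneg.mpr (sub_pos.mpr hBA).le) hBAg using 1
    rw [smul_smul, ← neg_sub A B, mul_neg, inv_mul_cancel₀ (sub_pos.mpr hBA).ne', neg_smul,
      one_smul]
  have hA1 : ConeLE C ((A + 1) • g) f := by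
    unfold ConeLE
    convert hC.add_mem_insert hA hneg using 1
    module
  have : A + 1 ≤ A := le_csSup (Real.nonempty_and_bddAbove_of_sSup_pos hα).2 ⟨by linarith, hA1⟩
  linarith

end AlphaBeta

theorem dist_to_midpoint_bound_general {X : Type*} [NormedAddCommGroup X] [NormedSpace ℝ X]
    (C : Set X) (D : ℝ) (hC : IsNiceCone C D)
    (f g : X)
    (hα : 0 < coneAlpha C g f)
    (hβ : {m : ℝ | 0 ≤ m ∧ ConeLE C f (m • g)}.Nonempty) :
    ‖f - ((coneAlpha C g f + coneBeta C g f) / 2) • g‖ ≤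
      D / 2 * ‖g‖ * coneAlpha C g f * (Real.exp (coneTheta C g f) - 1) := by
  set A := coneAlpha C g f
  set B := coneBeta C g f
  have hAB : A ≤ B := coneAlpha_le_coneBeta hC hα hβ
  have hA : f - A • g ∈ insert (0 : X) C := coneLE_coneAlpha_smul hC.closed hα
  have hB : B • g - f ∈ insert (0 : X) C := coneLE_coneBeta_smul hC.closed hβ
  have hlower : ConeLE C (-(((B - A) / 2) • g)) (f - ((A + B) / 2) • g) := by
    unfold ConeLE
    convert hA using 1
    module
  have hupper : ConeLE C (f - ((A + B) / 2) • g) (((B - A) / 2) • g) := by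
    unfold ConeLE
    convert hB using 1
    module
  have hexp : Real.exp (coneTheta C g f) = B / A :=
    Real.exp_log (div_pos (hα.trans_le hAB) hα)
  calc ‖f - ((A + B) / 2) • g‖ ≤ D * ‖((B - A) / 2) • g‖ := hC.adapted _ _ hlower hupper
    _ = D / 2 * ‖g‖ * A * (Real.exp (coneTheta C g f) - 1) := by
      rw [norm_smul, Real.norm_of_nonneg (by linarith), hexp]
      field_simp

/-- If `f, g` are comparable elements of a nice `D`-adapted cone, then
`‖f - ((α(g,f)+β(g,f))/2) g‖ ≤ (D/2) ‖g‖ α(g,f) (e^{θ(f,g)} - 1)`,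
where `θ(f,g) = log(β(g,f)/α(g,f))`. -/
theorem dist_to_midpoint_bound {X : Type*} [NormedAddCommGroup X] [NormedSpace ℝ X]
    [CompleteSpace X] (C : Set X) (D : ℝ) (hC : IsNiceCone C D)
    (f g : X) (hf : f ∈ C) (hg : g ∈ C)
    (hα : 0 < coneAlpha C g f)
    (hβ : {m : ℝ | 0 ≤ m ∧ ConeLE C f (m • g)}.Nonempty) :
    ‖f - ((coneAlpha C g f + coneBeta C g f) / 2) • g‖ ≤
      D / 2 * ‖g‖ * coneAlpha C g f * (Real.exp (coneTheta C g f) - 1) :=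
  dist_to_midpoint_bound_general C D hC f g hα hβ
end

section
/- Let (Ω, B, μ, σ) be an ergodic probability-preserving transformation, N : Ω → ℤ_{≥1} with N(σⁿ(ω))/n → 0 μ-a.e., and h : Ω → ℝ measurable with (1/n)·∑_{i=0}^{n-1} h(σⁱ(ω)) → λ ∈ ℝ for μ-a.e. ω. Then (1/n)·∑_{i=0}^{N(σⁿ(ω))-1} h(σ^{i+n}(ω)) → 0 for μ-a.e. ω. -/
/-!
Writing `Sₖ = ∑_{i<k} h(σⁱω)`, the sum in question is `S_{n+N(σⁿω)} - Sₙ`. Since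
`N(σⁿω) = o(n)`, we have `n + N(σⁿω) ~ n`, so `S_{n+N(σⁿω)}/n → λ` as well as `Sₙ/n → λ`,
and the difference divided by `n` tends to `0`.
-/

open MeasureTheory Filter Topology Finset

lemma tendsto_add_div_self_of_tendsto_div_zero {m : ℕ → ℕ}
    (hm : Tendsto (fun n : ℕ => (m n : ℝ) / n) atTop (𝓝 0)) :
    Tendsto (fun n : ℕ => ((n + m n : ℕ) : ℝ) / n) atTop (𝓝 1) := by
  have hsum : Tendsto (fun n : ℕ => 1 + (m n : ℝ) / n) atTop (𝓝 1) := by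
    simpa using tendsto_const_nhds.add hm
  refine hsum.congr' ?_
  filter_upwards [eventually_ne_atTop 0] with n hn
  field_simp
  push_cast
  ring

lemma tendsto_comp_add_div_of_tendsto_div {S : ℕ → ℝ} {lam : ℝ}
    (hS : Tendsto (fun n : ℕ => S n / n) atTop (𝓝 lam)) {m : ℕ → ℕ}
    (hm : Tendsto (fun n : ℕ => (m n : ℝ) / n) atTop (𝓝 0)) :
    Tendsto (fun n : ℕ => S (n + m n) / n) atTop (𝓝 lam) := by
  have hshift : Tendsto (fun n => n + m n) atTop atTop :=
    tendsto_atTop_mono (fun n => Nat.le_add_right n _) tendsto_id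
  have hprod := (hS.comp hshift).mul (tendsto_add_div_self_of_tendsto_div_zero hm)
  rw [mul_one] at hprod
  refine hprod.congr' ?_
  filter_upwards [eventually_ne_atTop 0] with n hn
  rw [Function.comp_apply, div_mul_div_cancel₀]
  positivity

lemma tendsto_sum_range_shift_div_of_tendsto_div {f : ℕ → ℝ} {lam : ℝ}
    (hf : Tendsto (fun n : ℕ => (∑ i ∈ range n, f i) / n) atTop (𝓝 lam)) {m : ℕ → ℕ}
    (hm : Tendsto (fun n : ℕ => (m n : ℝ) / n) atTop (𝓝 0)) :
    Tendsto (fun n : ℕ => (∑ i ∈ range (m n), f (i + n)) / n) atTop (𝓝 0) := by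
  have hdiff := (tendsto_comp_add_div_of_tendsto_div hf hm).sub hf
  rw [sub_self] at hdiff
  refine hdiff.congr fun n => ?_
  rw [← sub_div, sum_range_add_sub_sum_range]
  simp only [add_comm n]

theorem birkhoff_tail_sum_tendsto_zero_general {Ω : Type*} [MeasurableSpace Ω]
    (μ : Measure Ω) (σ : Ω → Ω)
    (N : Ω → ℕ)
    (hNsub : ∀ᵐ ω ∂μ, Tendsto (fun n : ℕ => (N (σ^[n] ω) : ℝ) / n) atTop (nhds 0))
    (h : Ω → ℝ) (lam : ℝ)
    (hBirk : ∀ᵐ ω ∂μ, Tendsto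
      (fun n : ℕ => (∑ i ∈ Finset.range n, h (σ^[i] ω)) / n) atTop (nhds lam)) :
    ∀ᵐ ω ∂μ, Tendsto
      (fun n : ℕ => (∑ i ∈ Finset.range (N (σ^[n] ω)), h (σ^[i + n] ω)) / n)
      atTop (nhds 0) := by
  filter_upwards [hNsub, hBirk] with ω hN hB
  exact tendsto_sum_range_shift_div_of_tendsto_div (f := fun i => h (σ^[i] ω)) hB hN

/-- If `N(σⁿ(ω))/n → 0` a.e. and the Birkhoff averages of `h` converge a.e. to a
finite constant `lam`, then `(1/n) ∑_{i=0}^{N(σⁿ(ω))-1} h(σ^{i+n}(ω)) → 0` a.e. -/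
theorem birkhoff_tail_sum_tendsto_zero {Ω : Type*} [MeasurableSpace Ω]
    (μ : Measure Ω) [IsProbabilityMeasure μ] (σ : Ω → Ω) (hσ : Ergodic σ μ)
    (N : Ω → ℕ) (hN1 : ∀ ω, 1 ≤ N ω)
    (hNsub : ∀ᵐ ω ∂μ, Tendsto (fun n : ℕ => (N (σ^[n] ω) : ℝ) / n) atTop (nhds 0))
    (h : Ω → ℝ) (hmeas : Measurable h) (lam : ℝ)
    (hBirk : ∀ᵐ ω ∂μ, Tendsto
      (fun n : ℕ => (∑ i ∈ Finset.range n, h (σ^[i] ω)) / n) atTop (nhds lam)) :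
    ∀ᵐ ω ∂μ, Tendsto
      (fun n : ℕ => (∑ i ∈ Finset.range (N (σ^[n] ω)), h (σ^[i + n] ω)) / n)
      atTop (nhds 0) :=
  birkhoff_tail_sum_tendsto_zero_general μ σ N hNsub h lam hBirk
end

section
/- Let (Ω, B, μ, σ) be an ergodic probability-preserving transformation and f : Ω → [0, ∞) measurable. If the Birkhoff averages (1/n)·∑_{i=0}^{n-1} f(σⁱ(ω)) converge to a finite constant λ for μ-almost every ω, then f is integrable. -/
/-!
Truncate `f` at height `N`. Since `σ` preserves `μ`, `∫ min f N = ∫ Aₙ(min f N)` for the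
Birkhoff averages `Aₙ`, `n ≥ 1`, and `Aₙ(min f N) ≤ min (Aₙ f) N`. The right-hand side is bounded
by `N` and tends a.e. to `min λ N`, so dominated convergence gives `∫ min f N ≤ λ`; monotone
convergence in `N` then bounds `∫ f` by `λ`.
-/

open MeasureTheory Filter
open scoped Topology

theorem abs_min_le_abs_of_nonneg {R : Type*} [AddCommGroup R] [LinearOrder R]
    [IsOrderedAddMonoid R] {a : R} (ha : 0 ≤ a) (c : R) : |min a c| ≤ |c| :=
  abs_le.2 ⟨le_min ((neg_nonpos.2 (abs_nonneg c)).trans ha) (neg_abs_le c),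
    (min_le_right a c).trans (le_abs_self c)⟩

section BirkhoffAverage

variable {α R : Type*} [Field R] [LinearOrder R] [IsStrictOrderedRing R]

theorem birkhoffAverage_mono {f : α → α} {g g' : α → R} (h : g ≤ g') (n : ℕ) (x : α) :
    birkhoffAverage R f g n x ≤ birkhoffAverage R f g' n x := by
  unfold birkhoffAverage birkhoffSum
  gcongr with k
  exact h _

theorem birkhoffAverage_nonneg {f : α → α} {g : α → R} (hg : 0 ≤ g) (n : ℕ) (x : α) :
    0 ≤ birkhoffAverage R f g n x :=
  smul_nonneg (by positivity) (Finset.sum_nonneg fun k _ => hg _)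

theorem measurable_birkhoffAverage [MeasurableSpace α] {σ : α → α} (hσ : Measurable σ)
    {g : α → ℝ} (hg : Measurable g) (n : ℕ) : Measurable (birkhoffAverage ℝ σ g n) :=
  (Finset.measurable_sum _ fun k _ => hg.comp (hσ.iterate k)).const_smul ((n : ℝ)⁻¹)

end BirkhoffAverage

namespace MeasureTheory.MeasurePreserving

variable {α E : Type*} [MeasurableSpace α] {μ : Measure α} {σ : α → α}
  [NormedAddCommGroup E] [NormedSpace ℝ E]

theorem integrable_birkhoffAverage (hσ : MeasurePreserving σ μ μ) {g : α → E}
    (hg : Integrable g μ) (n : ℕ) : Integrable (birkhoffAverage ℝ σ g n) μ :=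
  (integrable_finsetSum _ fun k _ => (hσ.iterate k).integrable_comp_of_integrable hg).smul _

theorem integral_birkhoffSum (hσ : MeasurePreserving σ μ μ) {g : α → E} (hg : Integrable g μ)
    (n : ℕ) : ∫ x, birkhoffSum σ g n x ∂μ = n • ∫ x, g x ∂μ := by
  have h_iter (k : ℕ) : ∫ x, g (σ^[k] x) ∂μ = ∫ x, g x ∂μ := by
    have hk := hσ.iterate k
    rw [← integral_map hk.measurable.aemeasurable (by rw [hk.map_eq]; exact hg.1), hk.map_eq]
  unfold birkhoffSum
  rw [integral_finsetSum (f := fun k x => g (σ^[k] x)) _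
    fun k _ => (hσ.iterate k).integrable_comp_of_integrable hg]
  simp only [h_iter, Finset.sum_const, Finset.card_range]

theorem integral_birkhoffAverage (hσ : MeasurePreserving σ μ μ) {g : α → E}
    (hg : Integrable g μ) {n : ℕ} (hn : n ≠ 0) :
    ∫ x, birkhoffAverage ℝ σ g n x ∂μ = ∫ x, g x ∂μ := by
  unfold birkhoffAverage
  rw [integral_smul, integral_birkhoffSum hσ hg, ← Nat.cast_smul_eq_nsmul ℝ, smul_smul,
    inv_mul_cancel₀ (Nat.cast_ne_zero.mpr hn), one_smul]

theorem integral_min_le_of_tendsto_birkhoffAverage [IsProbabilityMeasure μ]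
    (hσ : MeasurePreserving σ μ μ) {f : α → ℝ} (hf : Measurable f) (hf₀ : 0 ≤ f) {lam : ℝ}
    (hlim : ∀ᵐ x ∂μ, Tendsto (birkhoffAverage ℝ σ f · x) atTop (𝓝 lam)) (C : ℝ) :
    ∫ x, min (f x) C ∂μ ≤ lam := by
  set truncAvg : ℕ → α → ℝ := fun n x => min (birkhoffAverage ℝ σ f n x) C
  have htrunc_meas (n : ℕ) : Measurable (truncAvg n) :=
    (measurable_birkhoffAverage hσ.measurable hf n).min measurable_const
  have htrunc_bound (n : ℕ) (x : α) : ‖truncAvg n x‖ ≤ |C| :=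
    abs_min_le_abs_of_nonneg (birkhoffAverage_nonneg hf₀ n x) C
  have h_tendsto : Tendsto (fun n => ∫ x, truncAvg n x ∂μ) atTop (𝓝 (min lam C)) := by
    simpa using tendsto_integral_of_dominated_convergence (fun _ => |C|)
      (fun n => (htrunc_meas n).aestronglyMeasurable) (integrable_const _)
      (fun n => .of_forall (htrunc_bound n))
      (hlim.mono fun x hx => hx.min tendsto_const_nhds)
  have hg : Integrable (fun x => min (f x) C) μ :=
    .of_bound (hf.min measurable_const).aestronglyMeasurable |C|
      (.of_forall fun x => abs_min_le_abs_of_nonneg (hf₀ x) C)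
  have h_le (n : ℕ) (hn : n ≠ 0) : ∫ x, min (f x) C ∂μ ≤ ∫ x, truncAvg n x ∂μ := by
    rw [← integral_birkhoffAverage hσ hg hn]
    refine integral_mono (integrable_birkhoffAverage hσ hg n)
      (.of_bound (htrunc_meas n).aestronglyMeasurable _ (.of_forall (htrunc_bound n))) fun x => ?_
    have h_const : birkhoffAverage ℝ σ (fun _ => C) n x = C :=
      congrFun (birkhoffAverage_of_comp_eq ℝ rfl (Nat.cast_ne_zero.mpr hn)) x
    exact le_min (birkhoffAverage_mono (fun y => min_le_left _ _) n x)
      ((birkhoffAverage_mono (g' := fun _ => C) (fun y => min_le_right _ _) n x).trans_eq h_const)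
  calc ∫ x, min (f x) C ∂μ ≤ min lam C :=
        ge_of_tendsto h_tendsto ((eventually_ne_atTop 0).mono h_le)
    _ ≤ lam := min_le_left _ _

end MeasureTheory.MeasurePreserving

theorem MeasureTheory.integrable_of_forall_integral_min_le {α : Type*} [MeasurableSpace α]
    {μ : Measure α} [IsFiniteMeasure μ] {f : α → ℝ} (hf : Measurable f) (hf₀ : 0 ≤ f) {C : ℝ}
    (hC : ∀ N : ℕ, ∫ x, min (f x) N ∂μ ≤ C) : Integrable f μ := by
  refine ⟨hf.aestronglyMeasurable, ?_⟩
  rw [hasFiniteIntegral_iff_ofReal (.of_forall hf₀)]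
  have h_tendsto : Tendsto (fun N : ℕ => ∫⁻ x, ENNReal.ofReal (min (f x) N) ∂μ) atTop
      (𝓝 (∫⁻ x, ENNReal.ofReal (f x) ∂μ)) := by
    refine lintegral_tendsto_of_tendsto_of_monotone
      (fun N => (hf.min measurable_const).ennreal_ofReal.aemeasurable)
      (.of_forall fun x M N hMN => ENNReal.ofReal_le_ofReal ?_)
      (.of_forall fun x => tendsto_atTop_of_eventually_const (i₀ := ⌈f x⌉₊) fun N hN => ?_)
    · exact min_le_min_left _ (Nat.cast_le.mpr hMN)
    · rw [min_eq_left ((Nat.le_ceil _).trans (Nat.cast_le.mpr hN))]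
  have h_bound (N : ℕ) : ∫⁻ x, ENNReal.ofReal (min (f x) N) ∂μ ≤ ENNReal.ofReal C := by
    have h₀ (x : α) : 0 ≤ min (f x) (N : ℝ) := le_min (hf₀ x) N.cast_nonneg
    have h_int : Integrable (fun x => min (f x) (N : ℝ)) μ :=
      .of_bound (hf.min measurable_const).aestronglyMeasurable N
        (.of_forall fun x => (Real.norm_of_nonneg (h₀ x)).trans_le (min_le_right _ _))
    rw [← ofReal_integral_eq_lintegral_ofReal h_int (.of_forall h₀)]
    exact ENNReal.ofReal_le_ofReal (hC N)
  exact (le_of_tendsto' h_tendsto h_bound).trans_lt ENNReal.ofReal_lt_top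

/-- If `f ≥ 0` is measurable and its Birkhoff averages under an ergodic
probability-preserving transformation converge a.e. to a finite constant,
then `f` is integrable. -/
theorem integrable_of_birkhoff_avg_tendsto {Ω : Type*} [MeasurableSpace Ω]
    (μ : Measure Ω) [IsProbabilityMeasure μ] (σ : Ω → Ω) (hσ : Ergodic σ μ)
    (f : Ω → ℝ) (hmeas : Measurable f) (hnonneg : ∀ ω, 0 ≤ f ω) (lam : ℝ)
    (hBirk : ∀ᵐ ω ∂μ, Tendsto
      (fun n : ℕ => (∑ i ∈ Finset.range n, f (σ^[i] ω)) / n) atTop (nhds lam)) :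
    Integrable f μ := by
  have hlim : ∀ᵐ ω ∂μ, Tendsto (birkhoffAverage ℝ σ f · ω) atTop (𝓝 lam) := by
    filter_upwards [hBirk] with ω hω
    simpa only [birkhoffAverage, birkhoffSum, smul_eq_mul, inv_mul_eq_div] using hω
  exact integrable_of_forall_integral_min_le hmeas hnonneg fun N =>
    hσ.toMeasurePreserving.integral_min_le_of_tendsto_birkhoffAverage hmeas hnonneg hlim N
end
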